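/- arXiv:1510.05859 — 2 statements merged into one kernel-verified Lean document; each statement's English description precedes it below -/
import Mathlib

section
/- Let A be an n×n complex matrix with eigenvalues λ₁,…,λₙ and eigenvectors c₁,…,cₙ, let α be a scalar, and let A₁ = A + α·c₁·δ where δ = (1,0,…,0). For i ≥ 2 with λᵢ − λ₁ − α·c₁(0) ≠ 0, the vector cᵢ + xᵢ·c₁ with xᵢ = α·cᵢ(0)/(λᵢ − λ₁ − α·c₁(0)) is an eigenvector of A₁ with eigenvalue λᵢ. -/
theorem stmt_8 (n : ℕ) (A : Matrix (Fin (n + 1)) (Fin (n + 1)) ℂ)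
    (c₁ cᵢ : Fin (n + 1) → ℂ) (hc₁ : c₁ ≠ 0) (hcᵢ : cᵢ ≠ 0)
    (l₁ lᵢ α : ℂ)
    (heig₁ : A.mulVec c₁ = l₁ • c₁) (heigᵢ : A.mulVec cᵢ = lᵢ • cᵢ)
    (hden : lᵢ - l₁ - α * c₁ 0 ≠ 0)
    (δ : Fin (n + 1) → ℂ) (hδ : δ = fun j => if j = 0 then 1 else 0)
    (A₁ : Matrix (Fin (n + 1)) (Fin (n + 1)) ℂ)
    (hA₁ : A₁ = A + α • Matrix.vecMulVec c₁ δ)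
    (x : ℂ) (hx : x = α * cᵢ 0 / (lᵢ - l₁ - α * c₁ 0)) :
    A₁.mulVec (cᵢ + x • c₁) = lᵢ • (cᵢ + x • c₁) := by
  have hxeq : x * (lᵢ - l₁ - α * c₁ 0) = α * cᵢ 0 := by
    rw [hx]; field_simp
  have hdot : ∀ v : Fin (n + 1) → ℂ,
      (Matrix.vecMulVec c₁ δ).mulVec v = (v 0) • c₁ := by
    intro v
    funext i
    simp [Matrix.mulVec, Matrix.vecMulVec, dotProduct, hδ, ite_mul,
      Finset.mul_sum, mul_comm, Pi.smul_apply, smul_eq_mul]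
  rw [hA₁]
  rw [Matrix.add_mulVec, Matrix.mulVec_add, Matrix.mulVec_smul, heig₁, heigᵢ,
    Matrix.smul_mulVec, hdot]
  funext i
  simp only [Pi.add_apply, Pi.smul_apply, smul_eq_mul]
  linear_combination (-c₁ i) * hxeq
end

section
/- Let f(y) = 1 − y − y·Σ_{j=i+1}^{M} cⱼ/(λⱼ − λᵢ − y·cᵢ) with λᵢ < λ_{i+1} < ⋯ < λ_M real and cᵢ > 0, c_{i+1} > 0. Then f has at least one real root in the open interval (0, (λ_{i+1} − λᵢ)/cᵢ). -/
open Filter Set Topology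

theorem stmt_12 (i M : ℕ) (lam c : ℕ → ℝ)
    (hiM : i < M)
    (hlam : ∀ j k, i ≤ j → j < k → k ≤ M → lam j < lam k)
    (hci : 0 < c i) (hci1 : 0 < c (i + 1))
    (f : ℝ → ℝ)
    (hf : f = fun y => 1 - y -
      y * ∑ j ∈ Finset.Icc (i + 1) M, c j / (lam j - lam i - y * c i)) :
    ∃ y : ℝ, 0 < y ∧ y < (lam (i + 1) - lam i) / c i ∧ f y = 0 := by
  set S : ℝ := (lam (i + 1) - lam i) / c i with hSdef
  have hlami1 : lam i < lam (i + 1) := hlam i (i + 1) le_rfl (by omega) (by omega)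
  have hS : 0 < S := div_pos (by linarith) hci
  have hSc : S * c i = lam (i + 1) - lam i := div_mul_cancel₀ _ (ne_of_gt hci)
  -- denominators are positive for y < S
  have hden : ∀ j, i + 1 ≤ j → j ≤ M → ∀ y : ℝ, y < S →
      0 < lam j - lam i - y * c i := by
    intro j hj1 hjM y hy
    have hle : lam (i + 1) ≤ lam j := by
      rcases eq_or_lt_of_le hj1 with h | h
      · rw [h]
      · exact le_of_lt (hlam (i + 1) j (by omega) h hjM)
    have : y * c i < S * c i := mul_lt_mul_of_pos_right hy hci
    rw [hSc] at this
    linarith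
  -- continuity on Iio S
  have hcont : ContinuousOn f (Set.Iio S) := by
    rw [hf]
    apply ContinuousOn.sub
    · exact (continuous_const.sub continuous_id).continuousOn
    · apply ContinuousOn.mul continuous_id.continuousOn
      apply continuousOn_finset_sum
      intro j hj
      simp only [Finset.mem_Icc] at hj
      apply ContinuousOn.div continuousOn_const
      · exact ((continuous_const.sub continuous_const).sub
          (continuous_id.mul continuous_const)).continuousOn
      · intro y hy
        exact ne_of_gt (hden j hj.1 hj.2 y hy)
  -- split the sum
  have hsplit : ∀ y : ℝ, f y = (1 - y - y * ∑ j ∈ Finset.Icc (i + 2) M,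
      c j / (lam j - lam i - y * c i)) -
      y * (c (i + 1) / (lam (i + 1) - lam i - y * c i)) := by
    intro y
    have h1 : Finset.Icc (i + 1) M = insert (i + 1) (Finset.Icc (i + 2) M) := by
      ext x
      simp only [Finset.mem_Icc, Finset.mem_insert]
      omega
    have h2 : i + 1 ∉ Finset.Icc (i + 2) M := by simp
    rw [hf]
    simp only
    rw [h1, Finset.sum_insert h2]
    ring
  -- the "nice" part tends to a finite limit at S
  set g : ℝ → ℝ := fun y => 1 - y - y * ∑ j ∈ Finset.Icc (i + 2) M,
      c j / (lam j - lam i - y * c i) with hgdef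
  have hgcont : ContinuousAt g S := by
    apply ContinuousAt.sub
    · exact (continuous_const.sub continuous_id).continuousAt
    · apply ContinuousAt.mul continuous_id.continuousAt
      apply tendsto_finset_sum
      intro j hj
      show ContinuousAt (fun y : ℝ => c j / (lam j - lam i - y * c i)) S
      simp only [Finset.mem_Icc] at hj
      apply ContinuousAt.div continuousAt_const
      · exact ((continuous_const.sub continuous_const).sub
          (continuous_id.mul continuous_const)).continuousAt
      · have hj' : lam (i + 1) < lam j := hlam (i + 1) j (by omega) (by omega) hj.2
        rw [hSc]
        intro h
        linarith [h]
  have hg : Tendsto g (𝓝[<] S) (𝓝 (g S)) :=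
    hgcont.continuousWithinAt.tendsto
  -- the singular part tends to atTop
  have hDtend : Tendsto (fun y : ℝ => lam (i + 1) - lam i - y * c i)
      (𝓝[<] S) (𝓝[>] 0) := by
    apply tendsto_nhdsWithin_of_tendsto_nhds_of_eventually_within
    · have : ContinuousAt (fun y : ℝ => lam (i + 1) - lam i - y * c i) S :=
        ((continuous_const.sub continuous_const).sub
          (continuous_id.mul continuous_const)).continuousAt
      have h0 : lam (i + 1) - lam i - S * c i = 0 := by rw [hSc]; ring
      have := this.tendsto.mono_left (nhdsWithin_le_nhds (s := Set.Iio S))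
      rwa [h0] at this
    · filter_upwards [self_mem_nhdsWithin] with y hy
      exact hden (i + 1) le_rfl (by omega) y hy
  have hnum : Tendsto (fun y : ℝ => y * c (i + 1)) (𝓝[<] S) (𝓝 (S * c (i + 1))) :=
    ((continuous_id.mul continuous_const).continuousAt.tendsto).mono_left
      nhdsWithin_le_nhds
  have hsing : Tendsto (fun y : ℝ => y * (c (i + 1) / (lam (i + 1) - lam i - y * c i)))
      (𝓝[<] S) atTop := by
    have hinv : Tendsto (fun y : ℝ => (lam (i + 1) - lam i - y * c i)⁻¹)
        (𝓝[<] S) atTop := tendsto_inv_nhdsGT_zero.comp hDtend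
    have := Filter.Tendsto.pos_mul_atTop (mul_pos hS hci1) hnum hinv
    refine this.congr fun y => ?_
    rw [mul_comm (y * c (i + 1)), div_eq_mul_inv]
    ring
  -- find a point y₀ ∈ (0, S) with f y₀ < 0
  have hev1 : ∀ᶠ y in 𝓝[<] S, g y < g S + 1 :=
    hg.eventually_lt_const (by linarith)
  have hev2 : ∀ᶠ y in 𝓝[<] S,
      g S + 1 < y * (c (i + 1) / (lam (i + 1) - lam i - y * c i)) :=
    hsing.eventually (eventually_gt_atTop _)
  have hev3 : Set.Ioo 0 S ∈ 𝓝[<] S := Ioo_mem_nhdsLT hS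
  have hne : (𝓝[<] S).NeBot := inferInstance
  obtain ⟨y₀, hy₀1, hy₀2, hy₀3⟩ := (hev1.and (hev2.and hev3)).exists
  obtain ⟨hy₀3a, hy₀3b⟩ := hy₀3
  have hfy₀ : f y₀ < 0 := by
    rw [hsplit y₀]
    simp only [hgdef] at hy₀1 ⊢
    linarith
  -- f 0 = 1
  have hf0 : f 0 = 1 := by rw [hf]; simp
  -- IVT on [0, y₀]
  have hsub : Set.Icc (0 : ℝ) y₀ ⊆ Set.Iio S := fun x hx => lt_of_le_of_lt hx.2 hy₀3b
  have hIVT := intermediate_value_Ioo' (le_of_lt hy₀3a) (hcont.mono hsub)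
  have h0mem : (0 : ℝ) ∈ Set.Ioo (f y₀) (f 0) := by
    rw [hf0]; exact ⟨hfy₀, one_pos⟩
  obtain ⟨x, hx, hfx⟩ := hIVT h0mem
  exact ⟨x, hx.1, lt_trans hx.2 hy₀3b, hfx⟩
end
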